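/- Let 0 < q < p < 1, α ∈ (0,1), y = log((1−q)/(1−p))/log(p/q), and let Y₁,…,Y_m be i.i.d. with P(Y_i = 1) = αq, P(Y_i = −y) = α(1−q), P(Y_i = 0) = 1−α. Then for every ε > 0 and n ≥ 1, log P(∑_{i=1}^m Y_i ≥ −ε·log n) ≤ −α·m·Δ₊(p,q) + ε·log(p/q)·log n. -/

import Mathlib

/-!
Chernoff bound with `λ = x · log (p / q)` for a maximiser `x ∈ [0, 1]` of
`chernoffHellinger p q`. The choice of `y` makes `e^λ = (p / q)^x` and
`e^(-λ y) = ((1 - p) / (1 - q))^x`, so `E e^(λ Yᵢ) = 1 - α Δ₊(p, q)`. Independence and Markov's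
inequality give `P(∑ Yᵢ ≥ -ε log n) ≤ e^(λ ε log n) (1 - α Δ₊)^m`, and `log (1 - α Δ₊) ≤ -α Δ₊`
together with `λ ≤ log (p / q)` finishes. The event contains `{∀ i, Yᵢ = 1}`, so it has positive
probability and taking logarithms is legitimate (`Real.log 0 = 0`).
-/

open Set MeasureTheory ProbabilityTheory Real

section FiniteValued

variable {Ω : Type*} [MeasurableSpace Ω] {μ : Measure Ω} {X : Ω → ℝ} {s : Finset ℝ}

lemma ae_mem_finset_of_sum_measure_eq_one [IsProbabilityMeasure μ] (hX : Measurable X)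
    (hs : ∑ v ∈ s, μ {ω | X ω = v} = 1) : ∀ᵐ ω ∂μ, X ω ∈ s := by
  have hpre : μ (X ⁻¹' s) = 1 :=
    (sum_measure_preimage_singleton s fun v _ => hX (measurableSet_singleton v)).symm.trans hs
  exact (ae_mem_iff_measure_eq (hX s.measurableSet).nullMeasurableSet).2
    (by rw [hpre, measure_univ])

lemma comp_ae_eq_sum_indicator (hs : ∀ᵐ ω ∂μ, X ω ∈ s) (g : ℝ → ℝ) :
    (fun ω => g (X ω)) =ᵐ[μ]
      fun ω => ∑ v ∈ s, {ω | X ω = v}.indicator (fun _ => g v) ω := by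
  filter_upwards [hs] with ω hω
  simp [Set.indicator_apply, hω]

lemma integrable_comp_of_ae_mem_finset [IsFiniteMeasure μ] (hX : Measurable X)
    (hs : ∀ᵐ ω ∂μ, X ω ∈ s) (g : ℝ → ℝ) : Integrable (fun ω => g (X ω)) μ :=
  (integrable_finsetSum s fun v _ =>
    (integrable_const (g v)).indicator (measurableSet_eq_fun hX measurable_const)).congr
    (comp_ae_eq_sum_indicator hs g).symm

lemma integral_comp_eq_sum_of_ae_mem_finset [IsFiniteMeasure μ] (hX : Measurable X)
    (hs : ∀ᵐ ω ∂μ, X ω ∈ s) (g : ℝ → ℝ) :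
    ∫ ω, g (X ω) ∂μ = ∑ v ∈ s, μ.real {ω | X ω = v} * g v := by
  have hfiber (v : ℝ) : MeasurableSet {ω | X ω = v} := measurableSet_eq_fun hX measurable_const
  rw [integral_congr_ae (comp_ae_eq_sum_indicator hs g),
    integral_finsetSum s fun v _ => (integrable_const (g v)).indicator (hfiber v)]
  simp [integral_indicator_const _ (hfiber _)]

end FiniteValued

/-- `Δ₊(p, q)` is the supremum of `chernoffHellinger p q` over `[0, 1]`. -/
noncomputable def chernoffHellinger (p q x : ℝ) : ℝ :=
  1 - p ^ x * q ^ (1 - x) - (1 - p) ^ x * (1 - q) ^ (1 - x)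

lemma continuous_chernoffHellinger {p q : ℝ} (hp : p ≠ 0) (hq : q ≠ 0) (hp1 : p ≠ 1)
    (hq1 : q ≠ 1) : Continuous (chernoffHellinger p q) := by
  have hp1' : 1 - p ≠ 0 := sub_ne_zero.2 hp1.symm
  have hq1' : 1 - q ≠ 0 := sub_ne_zero.2 hq1.symm
  unfold chernoffHellinger
  fun_prop (disch := assumption)

lemma chernoffHellinger_lt_one {p q : ℝ} (hp : 0 < p) (hq : 0 < q) (hp1 : p < 1) (hq1 : q < 1)
    (x : ℝ) : chernoffHellinger p q x < 1 := by
  have hp1' : 0 < 1 - p := sub_pos.2 hp1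
  have hq1' : 0 < 1 - q := sub_pos.2 hq1
  have : 0 < p ^ x * q ^ (1 - x) := by positivity
  have : 0 < (1 - p) ^ x * (1 - q) ^ (1 - x) := by positivity
  unfold chernoffHellinger
  linarith

lemma rpow_mul_rpow_one_sub_eq_mul_exp {p q : ℝ} (hp : 0 < p) (hq : 0 < q) (x : ℝ) :
    p ^ x * q ^ (1 - x) = q * exp (x * log (p / q)) := by
  rw [mul_comm x, ← rpow_def_of_pos (div_pos hp hq), div_rpow hp.le hq.le, rpow_sub hq, rpow_one]
  field_simp

lemma log_one_sub_div_div_log_div_pos {p q : ℝ} (hq : 0 < q) (hqp : q < p) (hp : p < 1) :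
    0 < log ((1 - q) / (1 - p)) / log (p / q) :=
  div_pos (log_pos ((one_lt_div (sub_pos.2 hp)).2 (by linarith)))
    (log_pos ((one_lt_div hq).2 hqp))

lemma log_le_add_mul_sub_one_of_le_exp_mul_pow {P a M : ℝ} {m : ℕ} (hP : 0 < P) (hM : 0 < M)
    (h : P ≤ exp a * M ^ m) : log P ≤ a + m * (M - 1) :=
  calc log P ≤ log (exp a * M ^ m) := log_le_log hP h
    _ = a + m * log M := by rw [log_mul (exp_pos a).ne' (pow_pos hM m).ne', log_exp, log_pow]
    _ ≤ a + m * (M - 1) := by gcongr; exact log_le_sub_one_of_pos hM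

section ThreePoint

variable {Ω : Type*} [MeasurableSpace Ω] {μ : Measure Ω} {X : Ω → ℝ} {p q α y : ℝ}

lemma sum_one_neg_zero {M : Type*} [AddCommMonoid M] (hy : 0 < y) (f : ℝ → M) :
    ∑ v ∈ ({1, -y, 0} : Finset ℝ), f v = f 1 + f (-y) + f 0 := by
  have h1 : (1 : ℝ) ∉ ({-y, 0} : Finset ℝ) := by
    rw [Finset.mem_insert, Finset.mem_singleton, not_or]
    constructor <;> linarith
  have hy0 : -y ∉ ({0} : Finset ℝ) := Finset.notMem_singleton.2 (neg_ne_zero.2 hy.ne')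
  rw [Finset.sum_insert h1, Finset.sum_insert hy0, Finset.sum_singleton, add_assoc]

lemma ae_mem_of_measure_eq_ofReal [IsProbabilityMeasure μ] (hX : Measurable X) (hy : 0 < y)
    (h1 : μ {ω | X ω = 1} = ENNReal.ofReal (α * q))
    (h2 : μ {ω | X ω = -y} = ENNReal.ofReal (α * (1 - q)))
    (h3 : μ {ω | X ω = 0} = ENNReal.ofReal (1 - α))
    (hα : 0 ≤ α) (hα1 : α ≤ 1) (hq : 0 ≤ q) (hq1 : q ≤ 1) :
    ∀ᵐ ω ∂μ, X ω ∈ ({1, -y, 0} : Finset ℝ) := by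
  refine ae_mem_finset_of_sum_measure_eq_one hX ?_
  rw [sum_one_neg_zero hy, h1, h2, h3, ← ENNReal.ofReal_add (by positivity) (by nlinarith),
    ← ENNReal.ofReal_add (by nlinarith) (by linarith)]
  ring_nf
  exact ENNReal.ofReal_one

lemma mgf_mul_log_div_eq [IsProbabilityMeasure μ] (hX : Measurable X)
    (hq : 0 < q) (hqp : q < p) (hp : p < 1)
    (hy : y = log ((1 - q) / (1 - p)) / log (p / q))
    (hae : ∀ᵐ ω ∂μ, X ω ∈ ({1, -y, 0} : Finset ℝ))
    (h1 : μ {ω | X ω = 1} = ENNReal.ofReal (α * q))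
    (h2 : μ {ω | X ω = -y} = ENNReal.ofReal (α * (1 - q)))
    (h3 : μ {ω | X ω = 0} = ENNReal.ofReal (1 - α)) (hα : 0 ≤ α) (hα1 : α ≤ 1) (x : ℝ) :
    mgf X μ (x * log (p / q)) = 1 - α * chernoffHellinger p q x := by
  have hp0 : 0 < p := hq.trans hqp
  have hp1 : 0 < 1 - p := by linarith
  have hq1 : 0 < 1 - q := by linarith
  have hy0 : 0 < y := hy ▸ log_one_sub_div_div_log_div_pos hq hqp hp
  have hexp_neg_y : x * log (p / q) * -y = x * log ((1 - p) / (1 - q)) := by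
    rw [← inv_div (1 - q) (1 - p), log_inv, hy]
    field_simp [(log_pos ((one_lt_div hq).2 hqp)).ne']
  rw [mgf]
  beta_reduce
  rw [integral_comp_eq_sum_of_ae_mem_finset hX hae (fun v => exp (x * log (p / q) * v)),
    sum_one_neg_zero hy0, measureReal_def, measureReal_def, measureReal_def, h1, h2, h3,
    ENNReal.toReal_ofReal (by positivity), ENNReal.toReal_ofReal (by positivity),
    ENNReal.toReal_ofReal (by linarith), hexp_neg_y, chernoffHellinger,
    rpow_mul_rpow_one_sub_eq_mul_exp hp0 hq, rpow_mul_rpow_one_sub_eq_mul_exp hp1 hq1]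
  simp only [mul_one, mul_zero, exp_zero]
  ring

end ThreePoint

section Independent

variable {Ω ι : Type*} [MeasurableSpace Ω] {μ : Measure Ω} [Fintype ι] {Y : ι → Ω → ℝ}

lemma ProbabilityTheory.iIndepFun.measureReal_sum_ge_le_exp_mul_pow (hindep : iIndepFun Y μ)
    (hmeas : ∀ i, Measurable (Y i)) {t M : ℝ} (ht : 0 ≤ t)
    (hint : ∀ i, Integrable (fun ω => exp (t * Y i ω)) μ) (hM : ∀ i, mgf (Y i) μ t = M)
    (c : ℝ) : μ.real {ω | c ≤ ∑ i, Y i ω} ≤ exp (-t * c) * M ^ Fintype.card ι := by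
  have := hindep.isProbabilityMeasure
  have hsum := measure_ge_le_exp_mul_mgf c ht
    (hindep.integrable_exp_mul_sum hmeas (s := Finset.univ) fun i _ => hint i)
  rwa [hindep.mgf_sum hmeas, Finset.prod_congr rfl fun i _ => hM i, Finset.prod_const,
    Finset.card_univ, Finset.sum_fn] at hsum

lemma ProbabilityTheory.iIndepFun.measure_sum_ge_pos (hindep : iIndepFun Y μ) {v c : ℝ}
    (hv : ∀ i, 0 < μ {ω | Y i ω = v}) (hc : c ≤ Fintype.card ι * v) :
    0 < μ {ω | c ≤ ∑ i, Y i ω} := by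
  have hsub : ⋂ i, {ω | Y i ω = v} ⊆ {ω | c ≤ ∑ i, Y i ω} := by
    intro ω hω
    simp only [Set.mem_iInter, Set.mem_ofPred_eq] at hω ⊢
    simpa [hω] using hc
  refine lt_of_lt_of_le ?_ (measure_mono hsub)
  rw [hindep.meas_iInter (s := fun i => {ω | Y i ω = v})
    fun i => ⟨{v}, measurableSet_singleton v, rfl⟩]
  exact CanonicallyOrderedAdd.prod_pos.2 fun i _ => hv i

end Independent

theorem concentration_Y_general {Ω : Type*} [MeasurableSpace Ω] (μ : Measure Ω)
    [IsProbabilityMeasure μ] (m : ℕ) (p q α : ℝ)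
    (hq : 0 < q) (hqp : q < p) (hp : p < 1) (hα : 0 < α) (hα1 : α < 1)
    (y : ℝ) (hy : y = Real.log ((1 - q) / (1 - p)) / Real.log (p / q))
    (Y : Fin m → Ω → ℝ) (hmeas : ∀ i, Measurable (Y i))
    (hindep : iIndepFun Y μ)
    (hdist1 : ∀ i, μ {ω | Y i ω = 1} = ENNReal.ofReal (α * q))
    (hdist2 : ∀ i, μ {ω | Y i ω = -y} = ENNReal.ofReal (α * (1 - q)))
    (hdist3 : ∀ i, μ {ω | Y i ω = 0} = ENNReal.ofReal (1 - α))
    (ε : ℝ) (hε : 0 < ε) (n : ℕ) :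
    Real.log ((μ {ω | -(ε * Real.log n) ≤ ∑ i, Y i ω}).toReal) ≤
      -(α * m * sSup ((fun x : ℝ =>
          1 - p ^ x * q ^ (1 - x) - (1 - p) ^ x * (1 - q) ^ (1 - x)) '' Icc 0 1))
        + ε * Real.log (p / q) * Real.log n := by
  have hp0 : 0 < p := hq.trans hqp
  have ht : 0 < log (p / q) := log_pos ((one_lt_div hq).2 hqp)
  have hlogn : 0 ≤ ε * log n := mul_nonneg hε.le (log_natCast_nonneg n)
  obtain ⟨x, ⟨hx0, hx1⟩, hΔ⟩ := isCompact_Icc.exists_sSup_image_eq (nonempty_Icc.2 zero_le_one)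
    (continuous_chernoffHellinger hp0.ne' hq.ne' hp.ne (hqp.trans hp).ne).continuousOn
  change _ ≤ -(α * m * sSup (chernoffHellinger p q '' Icc 0 1)) + _
  rw [hΔ]
  have hae (i : Fin m) := ae_mem_of_measure_eq_ofReal (hmeas i)
    (hy ▸ log_one_sub_div_div_log_div_pos hq hqp hp) (hdist1 i) (hdist2 i) (hdist3 i)
    hα.le hα1.le hq.le (hqp.trans hp).le
  have hbound := hindep.measureReal_sum_ge_le_exp_mul_pow hmeas (mul_nonneg hx0 ht.le)
    (fun i => integrable_comp_of_ae_mem_finset (hmeas i) (hae i)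
      fun v => exp (x * log (p / q) * v))
    (fun i => mgf_mul_log_div_eq (hmeas i) hq hqp hp hy (hae i) (hdist1 i) (hdist2 i) (hdist3 i)
      hα.le hα1.le x) (-(ε * log n))
  have hpos := hindep.measure_sum_ge_pos (v := 1) (c := -(ε * log n))
    (fun i => by rw [hdist1]; exact ENNReal.ofReal_pos.2 (by positivity))
    (by rw [mul_one]; linarith [m.cast_nonneg (α := ℝ)])
  set M := 1 - α * chernoffHellinger p q x
  have hM : 0 < M := by nlinarith [chernoffHellinger_lt_one hp0 hq hp (hqp.trans hp) x]
  rw [Fintype.card_fin, neg_mul_neg] at hbound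
  calc log (μ.real {ω | -(ε * log n) ≤ ∑ i, Y i ω})
      ≤ x * log (p / q) * (ε * log n) + m * (M - 1) :=
        log_le_add_mul_sub_one_of_le_exp_mul_pow
          (ENNReal.toReal_pos hpos.ne' (measure_ne_top _ _)) hM hbound
    _ ≤ log (p / q) * (ε * log n) + m * (M - 1) := by
        gcongr
        exact mul_le_of_le_one_left ht.le hx1
    _ = -(α * m * chernoffHellinger p q x) + ε * log (p / q) * log n := by ring

theorem concentration_Y {Ω : Type*} [MeasurableSpace Ω] (μ : Measure Ω)
    [IsProbabilityMeasure μ] (m : ℕ) (p q α : ℝ)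
    (hq : 0 < q) (hqp : q < p) (hp : p < 1) (hα : 0 < α) (hα1 : α < 1)
    (y : ℝ) (hy : y = Real.log ((1 - q) / (1 - p)) / Real.log (p / q))
    (Y : Fin m → Ω → ℝ) (hmeas : ∀ i, Measurable (Y i))
    (hindep : iIndepFun Y μ)
    (hdist1 : ∀ i, μ {ω | Y i ω = 1} = ENNReal.ofReal (α * q))
    (hdist2 : ∀ i, μ {ω | Y i ω = -y} = ENNReal.ofReal (α * (1 - q)))
    (hdist3 : ∀ i, μ {ω | Y i ω = 0} = ENNReal.ofReal (1 - α))
    (ε : ℝ) (hε : 0 < ε) (n : ℕ) (hn : 1 ≤ n) :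
    Real.log ((μ {ω | -(ε * Real.log n) ≤ ∑ i, Y i ω}).toReal) ≤
      -(α * m * sSup ((fun x : ℝ =>
          1 - p ^ x * q ^ (1 - x) - (1 - p) ^ x * (1 - q) ^ (1 - x)) '' Icc 0 1))
        + ε * Real.log (p / q) * Real.log n :=
  concentration_Y_general μ m p q α hq hqp hp hα hα1 y hy Y hmeas hindep hdist1 hdist2 hdist3 ε hε n
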